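/- arXiv:2111.03028 — 6 statements merged into one kernel-verified Lean document; each statement's English description precedes it below -/
import Mathlib

section
/- Let 0 < q ≤ r ≤ 1, let W_q and W_r be geometrically distributed with parameters q and r respectively, and let φ : ℝ → [0,∞) be convex. Then E[φ(W_r - E[W_r])] ≤ E[φ(W_q - E[W_q])]; i.e., the centered geometric distribution with smaller success probability dominates in the convex order. -/
/-!
Thinning: if `N` is geometric with parameter `q` and each of its `N` units is kept independently
with probability `a = q(1 - r)/(r(1 - q))`, the number `M` of kept units is geometric with parameter
`r`, and `E[N - E N | M] = (r/q)(M - E M)`. Hence `M - E M = t • E[N - E N | M] + (1 - t) • 0` with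
`t = q/r`, which exhibits a martingale coupling of the two centred variables: `M - E M` is the
conditional expectation of a variable distributed as `N - E N` (take it equal to `N - E N` with
probability `t` and to an independent copy otherwise). Conditional Jensen then gives the
inequality for every convex `φ`.
-/

open MeasureTheory Set

lemma ConvexOn.add_rightDeriv_mul_sub_le {S : Set ℝ} {φ : ℝ → ℝ} (hφ : ConvexOn ℝ S φ) {x y : ℝ}
    (hx : x ∈ interior S) (hy : y ∈ S) :
    φ x + derivWithin φ (Ioi x) x * (y - x) ≤ φ y := by
  rcases lt_trichotomy x y with hxy | rfl | hyx
  · have h := hφ.rightDeriv_le_slope_of_mem_interior hx hy hxy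
    rw [slope_def_field, le_div_iff₀ (sub_pos.2 hxy)] at h
    linarith
  · simp
  · have h := hφ.slope_le_leftDeriv_of_mem_interior hy hx hyx
    have hlr := hφ.leftDeriv_le_rightDeriv_of_mem_interior hx
    rw [slope_def_field, div_le_iff₀ (sub_pos.2 hyx)] at h
    nlinarith

lemma ConvexOn.ofReal_mul_map_le_tsum {ι : Type*} {φ : ℝ → ℝ} (hφ : ConvexOn ℝ univ φ)
    (hφ0 : ∀ z, 0 ≤ φ z) {w f : ι → ℝ} (hw : ∀ i, 0 ≤ w i) {W x : ℝ} (hW : HasSum w W)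
    (hmean : HasSum (fun i => w i * f i) (W * x)) :
    ENNReal.ofReal (W * φ x) ≤ ∑' i, ENNReal.ofReal (w i * φ (f i)) := by
  by_cases htop : ∑' i, ENNReal.ofReal (w i * φ (f i)) = ⊤
  · exact htop ▸ le_top
  have hsum : Summable fun i => w i * φ (f i) :=
    (ENNReal.summable_toReal htop).congr fun i =>
      ENNReal.toReal_ofReal (mul_nonneg (hw i) (hφ0 _))
  set k := derivWithin φ (Ioi x) x
  have hline : HasSum (fun i => w i * (φ x + k * (f i - x))) (W * φ x) := by
    have h := (hW.mul_right (φ x - k * x)).add (hmean.mul_left k)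
    rw [show W * (φ x - k * x) + k * (W * x) = W * φ x by ring] at h
    exact h.congr_fun fun i => by ring
  rw [← ENNReal.ofReal_tsum_of_nonneg (fun i => mul_nonneg (hw i) (hφ0 _)) hsum]
  refine ENNReal.ofReal_le_ofReal (hasSum_le (fun i => ?_) hline hsum.hasSum)
  exact mul_le_mul_of_nonneg_left
    (hφ.add_rightDeriv_mul_sub_le (by simp) (mem_univ _)) (hw i)

section NegativeBinomial

variable {𝕜 : Type*} [NormedField 𝕜] {β : 𝕜}

lemma hasSum_choose_mul_pow_sub (m : ℕ) (hβ : ‖β‖ < 1) :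
    HasSum (fun n : ℕ => n.choose m * β ^ (n - m)) (1 / (1 - β) ^ (m + 1)) := by
  rw [← hasSum_nat_add_iff' m]
  have hlow : ∑ n ∈ Finset.range m, (n.choose m : 𝕜) * β ^ (n - m) = 0 :=
    Finset.sum_eq_zero fun n hn => by
      rw [Nat.choose_eq_zero_of_lt (Finset.mem_range.1 hn), Nat.cast_zero, zero_mul]
  simpa [hlow] using hasSum_choose_mul_geometric_of_norm_lt_one m hβ

lemma hasSum_succ_mul_choose_mul_pow_sub (m : ℕ) (hβ : ‖β‖ < 1) :
    HasSum (fun n : ℕ => (n + 1) * n.choose m * β ^ (n - m))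
      ((m + 1) / (1 - β) ^ (m + 2)) := by
  have h := ((hasSum_nat_add_iff' (f := fun n : ℕ => (n.choose (m + 1) : 𝕜) * β ^ (n - (m + 1)))
    1).2 (hasSum_choose_mul_pow_sub (m + 1) hβ)).mul_left ((m : 𝕜) + 1)
  simp only [Finset.sum_range_one, Nat.choose_zero_succ, Nat.cast_zero, zero_mul, sub_zero,
    Nat.add_sub_add_right] at h
  rw [show ((m : 𝕜) + 1) * (1 / (1 - β) ^ (m + 1 + 1)) = (m + 1) / (1 - β) ^ (m + 2) by ring] at h
  refine h.congr_fun fun n => ?_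
  have hchoose : ((n + 1) * n.choose m : 𝕜) = (n + 1).choose (m + 1) * (m + 1) := by
    simpa using congrArg (Nat.cast : ℕ → 𝕜) (Nat.add_one_mul_choose_eq n m)
  rw [hchoose]
  ring

end NegativeBinomial

lemma hasSum_geometric_pmf {p : ℝ} (hp : 0 < p) (hp1 : p ≤ 1) :
    HasSum (fun n : ℕ => p * (1 - p) ^ n) 1 := by
  have h := (hasSum_geometric_of_lt_one (sub_nonneg.2 hp1) (by linarith)).mul_left p
  rwa [sub_sub_cancel, mul_inv_cancel₀ hp.ne'] at h

lemma hasSum_geometric_pmf_mul_centered {p : ℝ} (hp : 0 < p) (hp1 : p ≤ 1) :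
    HasSum (fun n : ℕ => p * (1 - p) ^ n * (n - (1 - p) / p)) 0 := by
  have hβ : ‖1 - p‖ < 1 := by rw [Real.norm_eq_abs, abs_lt]; constructor <;> linarith
  have h := ((hasSum_succ_mul_choose_mul_pow_sub 0 hβ).mul_left p).sub
    (hasSum_choose_mul_pow_sub 0 hβ)
  simp only [Nat.choose_zero_right, Nat.sub_zero, Nat.cast_zero, Nat.cast_one, mul_one,
    sub_sub_cancel] at h
  rw [show p * ((0 + 1) / p ^ (0 + 2)) - 1 / p ^ (0 + 1) = 0 by field_simp; ring] at h
  refine h.congr_fun fun n => ?_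
  field_simp
  ring

lemma norm_one_sub_div_lt_one {q r : ℝ} (hq : 0 < q) (hqr : q ≤ r) : ‖1 - q / r‖ < 1 := by
  have hr : 0 < r := hq.trans_le hqr
  rw [Real.norm_eq_abs, abs_lt]
  constructor
  · linarith [div_le_one_of_le₀ hqr hr.le]
  · linarith [div_pos hq hr]

/-- The joint law of `(M, N)` in the thinning above: `q (1 - q) ^ n * choose n m * a ^ m *
(1 - a) ^ (n - m)`, with `(1 - q) a = q / r * (1 - r)` and `(1 - q) (1 - a) = 1 - q / r`. -/
noncomputable def geomThinning (q r : ℝ) (m n : ℕ) : ℝ :=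
  q * n.choose m * (q / r * (1 - r)) ^ m * (1 - q / r) ^ (n - m)

section geomThinning

variable {q r : ℝ}

lemma geomThinning_nonneg (hq : 0 ≤ q) (hqr : q ≤ r) (hr : r ≤ 1) (m n : ℕ) :
    0 ≤ geomThinning q r m n := by
  have hα : 0 ≤ q / r * (1 - r) := mul_nonneg (div_nonneg hq (hq.trans hqr)) (sub_nonneg.2 hr)
  have hβ : 0 ≤ 1 - q / r := sub_nonneg.2 (div_le_one_of_le₀ hqr (hq.trans hqr))
  unfold geomThinning
  have := Nat.cast_nonneg (α := ℝ) (n.choose m)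
  positivity

lemma hasSum_geomThinning_col (hr : r ≠ 0) (n : ℕ) :
    HasSum (geomThinning q r · n) (q * (1 - q) ^ n) := by
  have hsplit : q / r * (1 - r) + (1 - q / r) = 1 - q := by field_simp; ring
  have hsum : ∑ m ∈ Finset.range (n + 1), geomThinning q r m n = q * (1 - q) ^ n := by
    rw [← hsplit, add_pow, Finset.mul_sum]
    exact Finset.sum_congr rfl fun m _ => by unfold geomThinning; ring
  rw [← hsum]
  refine hasSum_sum_of_ne_finset_zero fun m hm => ?_
  rw [geomThinning, Nat.choose_eq_zero_of_lt (by simpa using hm)]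
  simp

lemma hasSum_geomThinning_row (hq : 0 < q) (hqr : q ≤ r) (m : ℕ) :
    HasSum (geomThinning q r m) (r * (1 - r) ^ m) := by
  have hr : 0 < r := hq.trans_le hqr
  have h := (hasSum_choose_mul_pow_sub m (norm_one_sub_div_lt_one hq hqr)).mul_left
    (q * (q / r * (1 - r)) ^ m)
  rw [show q * (q / r * (1 - r)) ^ m * (1 / (1 - (1 - q / r)) ^ (m + 1)) = r * (1 - r) ^ m by
    simp only [sub_sub_cancel, mul_pow, div_pow]; field_simp; ring] at h
  exact h.congr_fun fun n => by unfold geomThinning; ring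

lemma hasSum_geomThinning_mul_centered (hq : 0 < q) (hqr : q ≤ r) (m : ℕ) :
    HasSum (fun n => geomThinning q r m n * (n - (1 - q) / q))
      (r * (1 - r) ^ m * (r / q * (m - (1 - r) / r))) := by
  have hr : 0 < r := hq.trans_le hqr
  have h := ((hasSum_succ_mul_choose_mul_pow_sub m (norm_one_sub_div_lt_one hq hqr)).mul_left
    (q * (q / r * (1 - r)) ^ m)).sub ((hasSum_geomThinning_row hq hqr m).mul_left (1 / q))
  rw [show q * (q / r * (1 - r)) ^ m * ((m + 1) / (1 - (1 - q / r)) ^ (m + 2)) -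
      1 / q * (r * (1 - r) ^ m) = r * (1 - r) ^ m * (r / q * (m - (1 - r) / r)) by
    simp only [sub_sub_cancel, mul_pow, div_pow]; field_simp; ring] at h
  refine h.congr_fun fun n => ?_
  unfold geomThinning
  field_simp
  ring

end geomThinning

/-- `K i j` is the joint weight of the values `x i` and `y j`, with marginal weights `p` and `p'`;
the last field says that the conditional mean of `y` given the index `i` is `x i`. -/
structure IsMartingaleCoupling {ι κ : Type*} (K : ι → κ → ℝ) (p x : ι → ℝ) (p' y : κ → ℝ) :
    Prop where
  nonneg : ∀ i j, 0 ≤ K i j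
  hasSum_row : ∀ i, HasSum (K i) (p i)
  hasSum_col : ∀ j, HasSum (K · j) (p' j)
  hasSum_row_mul : ∀ i, HasSum (fun j => K i j * y j) (p i * x i)

namespace IsMartingaleCoupling

variable {ι κ : Type*} {K : ι → κ → ℝ} {p x : ι → ℝ} {p' y : κ → ℝ}

theorem tsum_ofReal_mul_le (hK : IsMartingaleCoupling K p x p' y) {φ : ℝ → ℝ}
    (hφ : ConvexOn ℝ univ φ) (hφ0 : ∀ z, 0 ≤ φ z) :
    ∑' i, ENNReal.ofReal (p i * φ (x i)) ≤ ∑' j, ENNReal.ofReal (p' j * φ (y j)) :=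
  calc ∑' i, ENNReal.ofReal (p i * φ (x i))
      ≤ ∑' i, ∑' j, ENNReal.ofReal (K i j * φ (y j)) := ENNReal.tsum_le_tsum fun i =>
        hφ.ofReal_mul_map_le_tsum hφ0 (hK.nonneg i) (hK.hasSum_row i) (hK.hasSum_row_mul i)
    _ = ∑' j, ∑' i, ENNReal.ofReal (K i j * φ (y j)) := ENNReal.tsum_comm
    _ = ∑' j, ENNReal.ofReal (p' j * φ (y j)) := tsum_congr fun j => by
        have hcol := (hK.hasSum_col j).mul_right (φ (y j))
        rw [← hcol.tsum_eq, ENNReal.ofReal_tsum_of_nonneg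
          (fun i => mul_nonneg (hK.nonneg i j) (hφ0 _)) hcol.summable]

theorem mix (hK : IsMartingaleCoupling K p x p' y) (hp : HasSum p 1) (hp' : HasSum p' 1)
    (hy : HasSum (fun j => p' j * y j) 0) {t : ℝ} (ht0 : 0 ≤ t) (ht1 : t ≤ 1) :
    IsMartingaleCoupling (fun i j => t * K i j + (1 - t) * (p i * p' j)) p (fun i => t * x i)
      p' y where
  nonneg i j := by
    have hpi : 0 ≤ p i := (hK.hasSum_row i).nonneg (hK.nonneg i)
    have hpj : 0 ≤ p' j := (hK.hasSum_col j).nonneg (hK.nonneg · j)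
    have : 0 ≤ 1 - t := sub_nonneg.2 ht1
    have := hK.nonneg i j
    positivity
  hasSum_row i := by
    have h := ((hK.hasSum_row i).mul_left t).add ((hp'.mul_left (p i)).mul_left (1 - t))
    rwa [show t * p i + (1 - t) * (p i * 1) = p i by ring] at h
  hasSum_col j := by
    have h := ((hK.hasSum_col j).mul_left t).add ((hp.mul_right (p' j)).mul_left (1 - t))
    rwa [show t * p' j + (1 - t) * (1 * p' j) = p' j by ring] at h
  hasSum_row_mul i := by
    have h := ((hK.hasSum_row_mul i).mul_left t).add ((hy.mul_left (p i)).mul_left (1 - t))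
    rw [show t * (p i * x i) + (1 - t) * (p i * 0) = p i * (t * x i) by ring] at h
    exact h.congr_fun fun j => by ring

end IsMartingaleCoupling

theorem isMartingaleCoupling_geomThinning {q r : ℝ} (hq : 0 < q) (hqr : q ≤ r) (hr : r ≤ 1) :
    IsMartingaleCoupling (geomThinning q r) (fun m => r * (1 - r) ^ m)
      (fun m => r / q * (m - (1 - r) / r)) (fun n => q * (1 - q) ^ n) (fun n => n - (1 - q) / q)
    where
  nonneg := geomThinning_nonneg hq.le hqr hr
  hasSum_row := hasSum_geomThinning_row hq hqr
  hasSum_col := hasSum_geomThinning_col (hq.trans_le hqr).ne'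
  hasSum_row_mul := hasSum_geomThinning_mul_centered hq hqr

lemma lintegral_ofReal_comp_eq_tsum {Ω : Type*} [MeasurableSpace Ω] {μ : Measure Ω}
    {W : Ω → ℕ} (hW : Measurable W) {p g : ℕ → ℝ}
    (hp : ∀ m, μ {ω | W ω = m} = ENNReal.ofReal (p m)) (hg : ∀ m, 0 ≤ g m) :
    ∫⁻ ω, ENNReal.ofReal (g (W ω)) ∂μ = ∑' m, ENNReal.ofReal (p m * g m) := by
  rw [← lintegral_map (f := fun m => ENNReal.ofReal (g m)) (measurable_of_countable _) hW,
    lintegral_countable']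
  refine tsum_congr fun m => ?_
  rw [Measure.map_apply hW (measurableSet_singleton m), ENNReal.ofReal_mul' (hg m), mul_comm]
  exact congrArg (· * _) (hp m)

theorem geometric_convex_order_general (q r : ℝ) (hq : 0 < q) (hqr : q ≤ r) (hr : r ≤ 1)
    (Ω : Type*) [MeasurableSpace Ω] (μ : Measure Ω)
    (Wq Wr : Ω → ℕ) (hWqm : Measurable Wq) (hWrm : Measurable Wr)
    (hWq : ∀ m : ℕ, μ {ω | Wq ω = m} = ENNReal.ofReal (q * (1 - q) ^ m))
    (hWr : ∀ m : ℕ, μ {ω | Wr ω = m} = ENNReal.ofReal (r * (1 - r) ^ m))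
    (φ : ℝ → ℝ) (hφ : ConvexOn ℝ Set.univ φ) (hφ0 : ∀ x, 0 ≤ φ x) :
    ∫⁻ ω, ENNReal.ofReal (φ ((Wr ω : ℝ) - (1 - r) / r)) ∂μ
      ≤ ∫⁻ ω, ENNReal.ofReal (φ ((Wq ω : ℝ) - (1 - q) / q)) ∂μ := by
  have hr0 : 0 < r := hq.trans_le hqr
  have hcoupling := (isMartingaleCoupling_geomThinning hq hqr hr).mix
    (hasSum_geometric_pmf hr0 hr) (hasSum_geometric_pmf hq (hqr.trans hr))
    (hasSum_geometric_pmf_mul_centered hq (hqr.trans hr))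
    (div_nonneg hq.le hr0.le) (div_le_one_of_le₀ hqr hr0.le)
  have hx (m : ℕ) : q / r * (r / q * ((m : ℝ) - (1 - r) / r)) = m - (1 - r) / r := by
    field_simp
  rw [lintegral_ofReal_comp_eq_tsum hWrm hWr (g := fun m => φ (m - (1 - r) / r)) fun _ => hφ0 _,
    lintegral_ofReal_comp_eq_tsum hWqm hWq (g := fun n => φ (n - (1 - q) / q)) fun _ => hφ0 _]
  simpa only [hx] using hcoupling.tsum_ofReal_mul_le hφ hφ0

/-- Convex ordering of centered geometric distributions: for `0 < q ≤ r ≤ 1` and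
any nonnegative convex `φ`, `E[φ(W_r - E W_r)] ≤ E[φ(W_q - E W_q)]`, where `W_p`
is geometric with parameter `p` on `{0,1,2,…}` (so `E W_p = (1-p)/p`). -/
theorem geometric_convex_order (q r : ℝ) (hq : 0 < q) (hqr : q ≤ r) (hr : r ≤ 1)
    (Ω : Type*) [MeasurableSpace Ω] (μ : Measure Ω) [IsProbabilityMeasure μ]
    (Wq Wr : Ω → ℕ) (hWqm : Measurable Wq) (hWrm : Measurable Wr)
    (hWq : ∀ m : ℕ, μ {ω | Wq ω = m} = ENNReal.ofReal (q * (1 - q) ^ m))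
    (hWr : ∀ m : ℕ, μ {ω | Wr ω = m} = ENNReal.ofReal (r * (1 - r) ^ m))
    (φ : ℝ → ℝ) (hφ : ConvexOn ℝ Set.univ φ) (hφ0 : ∀ x, 0 ≤ φ x) :
    ∫⁻ ω, ENNReal.ofReal (φ ((Wr ω : ℝ) - (1 - r) / r)) ∂μ
      ≤ ∫⁻ ω, ENNReal.ofReal (φ ((Wq ω : ℝ) - (1 - q) / q)) ∂μ :=
  geometric_convex_order_general q r hq hqr hr Ω μ Wq Wr hWqm hWrm hWq hWr φ hφ hφ0
end

section
/- For λ ∈ ℝ, κ ≥ 1 and 0 < q ≤ r ≤ 1, with W_q, W_r geometric with parameters q, r: E[e^{λ(W_r - E[W_r])} κ^{W_r}] ≤ E[e^{λ(W_q - E[W_q])} κ^{W_q}] (whenever the right-hand side is finite). -/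
/-!
Summing the geometric series, `E[e^{λ(W_p - E W_p)} κ^{W_p}] = e^{-λ(1-p)/p} p / (1 - (1-p) c)`
with `c = e^λ κ`, and it is `∞` when `(1 - p) c ≥ 1`. Where it is finite, its derivative in `p`
has the sign of `p (1 - c) + λ (1 - (1 - p) c)`, which is `≤ 0` because `c ≥ 1 + λ`;
so the closed form decreases in `p`.
-/

open MeasureTheory

theorem lintegral_comp_eq_tsum {Ω α : Type*} [MeasurableSpace Ω] [MeasurableSpace α]
    [Countable α] [MeasurableSingletonClass α] {μ : Measure Ω} {X : Ω → α} (hX : Measurable X)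
    (f : α → ENNReal) : ∫⁻ ω, f (X ω) ∂μ = ∑' a, f a * μ {ω | X ω = a} := by
  rw [← lintegral_map Measurable.of_discrete hX, lintegral_countable']
  simp_rw [Measure.map_apply hX (measurableSet_singleton _)]
  rfl

theorem lintegral_ofReal_mul_pow_of_geometric {Ω : Type*} [MeasurableSpace Ω] {μ : Measure Ω}
    {W : Ω → ℕ} (hW : Measurable W) {p : ℝ} (hp : 0 ≤ p) (hp1 : p ≤ 1)
    (hWp : ∀ m : ℕ, μ {ω | W ω = m} = ENNReal.ofReal (p * (1 - p) ^ m)) {a x : ℝ}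
    (ha : 0 ≤ a) (hx : 0 ≤ x) :
    ∫⁻ ω, ENNReal.ofReal (a * x ^ W ω) ∂μ
      = ENNReal.ofReal (a * p) * (1 - ENNReal.ofReal ((1 - p) * x))⁻¹ := by
  have h1p : 0 ≤ 1 - p := by linarith
  rw [lintegral_comp_eq_tsum hW (fun m => ENNReal.ofReal (a * x ^ m)), ← ENNReal.tsum_geometric,
    ← ENNReal.tsum_mul_left]
  refine tsum_congr fun m => ?_
  rw [hWp, ← ENNReal.ofReal_pow (by positivity), ← ENNReal.ofReal_mul (by positivity),
    ← ENNReal.ofReal_mul (by positivity), mul_pow]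
  ring_nf

theorem Real.exp_mul_sub_mul_pow (lam κ b : ℝ) (m : ℕ) :
    Real.exp (lam * (m - b)) * κ ^ m = Real.exp (-(lam * b)) * (Real.exp lam * κ) ^ m := by
  rw [mul_pow, ← Real.exp_nat_mul, mul_sub, Real.exp_sub, Real.exp_neg]
  field_simp

theorem lintegral_exp_mul_pow_of_geometric {Ω : Type*} [MeasurableSpace Ω] {μ : Measure Ω}
    {W : Ω → ℕ} (hW : Measurable W) {p : ℝ} (hp : 0 < p) (hp1 : p ≤ 1)
    (hWp : ∀ m : ℕ, μ {ω | W ω = m} = ENNReal.ofReal (p * (1 - p) ^ m)) (lam : ℝ) {κ : ℝ}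
    (hκ : 0 ≤ κ) :
    ∫⁻ ω, ENNReal.ofReal (Real.exp (lam * ((W ω : ℝ) - (1 - p) / p)) * κ ^ W ω) ∂μ
      = ENNReal.ofReal (Real.exp (-(lam * ((1 - p) / p))) * p)
        * (1 - ENNReal.ofReal ((1 - p) * (Real.exp lam * κ)))⁻¹ := by
  simp only [Real.exp_mul_sub_mul_pow]
  exact lintegral_ofReal_mul_pow_of_geometric hW hp.le hp1 hWp (Real.exp_pos _).le
    (by positivity)

theorem ENNReal.inv_one_sub_ofReal {y : ℝ} (hy0 : 0 ≤ y) (hy1 : y < 1) :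
    (1 - ENNReal.ofReal y)⁻¹ = ENNReal.ofReal (1 - y)⁻¹ := by
  rw [← ENNReal.ofReal_one, ← ENNReal.ofReal_sub _ hy0, ENNReal.ofReal_inv_of_pos (by linarith)]

/-- The closed form of `E[e^{λ(W_p - E W_p)} κ^{W_p}]` for `W_p` geometric with parameter `p`,
where `c = e^λ κ`; it is the true value only when `(1 - p) c < 1`. -/
noncomputable def tiltedGeomMoment (lam c p : ℝ) : ℝ :=
  Real.exp (-(lam * ((1 - p) / p))) * p / (1 - (1 - p) * c)

theorem hasDerivAt_tiltedGeomMoment {lam c p : ℝ} (hp : p ≠ 0) (hD : 1 - (1 - p) * c ≠ 0) :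
    HasDerivAt (tiltedGeomMoment lam c)
      (Real.exp (-(lam * ((1 - p) / p))) * (p * (1 - c) + lam * (1 - (1 - p) * c))
        / (p * (1 - (1 - p) * c) ^ 2)) p := by
  have hg : HasDerivAt (fun p => -(lam * ((1 - p) / p))) (lam / p ^ 2) p :=
    ((((hasDerivAt_id' p).const_sub 1).div (hasDerivAt_id' p) hp).const_mul lam).neg.congr_deriv
      (by field_simp; ring)
  have hD' : HasDerivAt (fun p => 1 - (1 - p) * c) c p := by
    simpa using (((hasDerivAt_id' p).const_sub 1).mul_const c).const_sub 1
  exact ((hg.exp.mul (hasDerivAt_id' p)).div hD' hD).congr_deriv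
    (by simp only [Pi.mul_apply]; field_simp; ring)

theorem mul_one_sub_add_mul_nonpos {p c lam : ℝ} (hp : 0 < p) (hp1 : p ≤ 1) (hc : 1 + lam ≤ c)
    (hD : 0 < 1 - (1 - p) * c) : p * (1 - c) + lam * (1 - (1 - p) * c) ≤ 0 := by
  rcases le_or_gt 0 (p + lam * (1 - p)) with hA | hA
  · nlinarith [mul_le_mul_of_nonneg_right hc hA, sq_nonneg lam]
  · have hp1' : p < 1 := lt_of_le_of_ne hp1 (by rintro rfl; linarith)
    nlinarith [mul_neg_of_neg_of_pos hA hD, mul_pos hp hp, sub_pos.2 hp1']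

theorem antitoneOn_tiltedGeomMoment {lam c q : ℝ} (hq : 0 < q) (hc : 1 + lam ≤ c)
    (hqc : (1 - q) * c < 1) : AntitoneOn (tiltedGeomMoment lam c) (Set.Icc q 1) := by
  have hD : ∀ p ∈ Set.Icc q 1, 0 < 1 - (1 - p) * c := by
    rintro p ⟨hqp, hp1⟩
    rcases hp1.lt_or_eq with hp1 | rfl
    · -- `(1 - q) (1 - (1 - p) c) = (p - q) + (1 - p) (1 - (1 - q) c)`
      nlinarith [mul_pos (sub_pos.2 hp1) (sub_pos.2 hqc)]
    · simp
  have hderiv := fun p (hp : p ∈ Set.Icc q 1) =>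
    hasDerivAt_tiltedGeomMoment (lam := lam) (hq.trans_le hp.1).ne' (hD p hp).ne'
  refine antitoneOn_of_hasDerivWithinAt_nonpos (convex_Icc q 1)
    (fun p hp => (hderiv p hp).continuousAt.continuousWithinAt)
    (fun p hp => (hderiv p (interior_subset hp)).hasDerivWithinAt) fun p hp => ?_
  have hp := interior_subset hp
  have hp0 : 0 < p := hq.trans_le hp.1
  exact div_nonpos_of_nonpos_of_nonneg (mul_nonpos_of_nonneg_of_nonpos (Real.exp_pos _).le
    (mul_one_sub_add_mul_nonpos hp0 hp.2 hc (hD p hp))) (by positivity)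

theorem geometric_exp_moment_order_general (q r : ℝ) (hq : 0 < q) (hqr : q ≤ r) (hr : r ≤ 1)
    (lam κ : ℝ) (hκ : 1 ≤ κ)
    (Ω : Type*) [MeasurableSpace Ω] (μ : Measure Ω)
    (Wq Wr : Ω → ℕ) (hWqm : Measurable Wq) (hWrm : Measurable Wr)
    (hWq : ∀ m : ℕ, μ {ω | Wq ω = m} = ENNReal.ofReal (q * (1 - q) ^ m))
    (hWr : ∀ m : ℕ, μ {ω | Wr ω = m} = ENNReal.ofReal (r * (1 - r) ^ m)) :
    ∫⁻ ω, ENNReal.ofReal (Real.exp (lam * ((Wr ω : ℝ) - (1 - r) / r)) * κ ^ (Wr ω)) ∂μ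
      ≤ ∫⁻ ω, ENNReal.ofReal (Real.exp (lam * ((Wq ω : ℝ) - (1 - q) / q)) * κ ^ (Wq ω)) ∂μ := by
  have hκ0 : 0 ≤ κ := zero_le_one.trans hκ
  have hr0 : 0 < r := hq.trans_le hqr
  rw [lintegral_exp_mul_pow_of_geometric hWrm hr0 hr hWr lam hκ0,
    lintegral_exp_mul_pow_of_geometric hWqm hq (hqr.trans hr) hWq lam hκ0]
  set c := Real.exp lam * κ
  rcases le_or_gt 1 ((1 - q) * c) with hqc | hqc
  · rw [tsub_eq_zero_of_le (ENNReal.one_le_ofReal.2 hqc), ENNReal.inv_zero,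
      ENNReal.mul_top (by simp only [ne_eq, ENNReal.ofReal_eq_zero, not_le]; positivity)]
    exact le_top
  have hc : 1 + lam ≤ c := by nlinarith [Real.add_one_le_exp lam, Real.exp_pos lam]
  have hrc : (1 - r) * c < 1 :=
    (mul_le_mul_of_nonneg_right (by linarith) (by positivity)).trans_lt hqc
  rw [ENNReal.inv_one_sub_ofReal (mul_nonneg (by linarith) (by positivity)) hqc,
    ENNReal.inv_one_sub_ofReal (mul_nonneg (by linarith) (by positivity)) hrc,
    ← ENNReal.ofReal_mul (by positivity), ← ENNReal.ofReal_mul (by positivity)]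
  exact ENNReal.ofReal_le_ofReal
    (antitoneOn_tiltedGeomMoment hq hc hqc ⟨le_rfl, hqr.trans hr⟩ ⟨hqr, hr⟩ hqr)

/-- For `λ ∈ ℝ`, `κ ≥ 1` and `0 < q ≤ r ≤ 1`, with `W_p` geometric with
parameter `p` on `{0,1,2,…}` (so `E W_p = (1-p)/p`):
`E[e^{λ(W_r - E W_r)} κ^{W_r}] ≤ E[e^{λ(W_q - E W_q)} κ^{W_q}]`. -/
theorem geometric_exp_moment_order (q r : ℝ) (hq : 0 < q) (hqr : q ≤ r) (hr : r ≤ 1)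
    (lam κ : ℝ) (hκ : 1 ≤ κ)
    (Ω : Type*) [MeasurableSpace Ω] (μ : Measure Ω) [IsProbabilityMeasure μ]
    (Wq Wr : Ω → ℕ) (hWqm : Measurable Wq) (hWrm : Measurable Wr)
    (hWq : ∀ m : ℕ, μ {ω | Wq ω = m} = ENNReal.ofReal (q * (1 - q) ^ m))
    (hWr : ∀ m : ℕ, μ {ω | Wr ω = m} = ENNReal.ofReal (r * (1 - r) ^ m)) :
    ∫⁻ ω, ENNReal.ofReal (Real.exp (lam * ((Wr ω : ℝ) - (1 - r) / r)) * κ ^ (Wr ω)) ∂μ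
      ≤ ∫⁻ ω, ENNReal.ofReal (Real.exp (lam * ((Wq ω : ℝ) - (1 - q) / q)) * κ ^ (Wq ω)) ∂μ :=
  geometric_exp_moment_order_general q r hq hqr hr lam κ hκ Ω μ Wq Wr hWqm hWrm hWq hWr
end

section
/- Let f(t) = Σ_{k=0}^∞ (1-α)α^k exp(-β^{-k} t) for t > 0, with 0 < α < 1 < β and ρ = -log(α)/log(β). Then there exist constants 0 < C₁ < C₂ < ∞ such that C₁ t^{-ρ} ≤ f(t) ≤ C₂ t^{-ρ} for all t > 1. -/
/-!
Since `α = β ^ (-ρ)`, the power `t ^ (-ρ)` lies between `α ^ (m + 1)` and `α ^ m` when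
`β ^ m ≤ t < β ^ (m + 1)`. The summand `k = m + 1` alone is at least `(1 - α) e⁻¹ α ^ (m + 1)`.
The summands `k > m` add up to at most `α ^ (m + 1)`, and the summand `k = m - j` is at most
`(1 - α) α ^ m · α⁻¹ ^ j e ^ (-β ^ j)`; the latter series converges because `β ^ j` grows
geometrically, so the double exponential beats `α⁻¹ ^ j`.
-/

open Real Filter Finset

noncomputable def expMixtureTerm (α β t : ℝ) (k : ℕ) : ℝ :=
  (1 - α) * α ^ k * exp (-(β ^ k)⁻¹ * t)

theorem summable_pow_mul_exp_neg_pow (a : ℝ) {b : ℝ} (hb : 1 < b) :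
    Summable fun j : ℕ => a ^ j * exp (-b ^ j) := by
  refine summable_of_ratio_norm_eventually_le (r := 1 / 2) (by norm_num) ?_
  have hratio : Tendsto (fun j : ℕ => |a| * exp (-((b - 1) * b ^ j))) atTop (nhds 0) := by
    simpa using (tendsto_exp_neg_atTop_nhds_zero.comp
      ((tendsto_pow_atTop_atTop_of_one_lt hb).const_mul_atTop (sub_pos.2 hb))).const_mul |a|
  filter_upwards [hratio.eventually_le_const (by norm_num : (0 : ℝ) < 1 / 2)] with j hj
  have hstep : a ^ (j + 1) * exp (-b ^ (j + 1))
      = a * exp (-((b - 1) * b ^ j)) * (a ^ j * exp (-b ^ j)) := by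
    rw [pow_succ, pow_succ, show -(b ^ j * b) = -((b - 1) * b ^ j) + -b ^ j by ring, exp_add]
    ring
  rw [hstep, norm_mul, norm_mul, norm_of_nonneg (exp_pos _).le]
  exact mul_le_mul_of_nonneg_right hj (norm_nonneg _)

theorem pow_rpow_logb {α β : ℝ} (hα : 0 < α) (hβ : 0 < β) (hβ1 : β ≠ 1) (n : ℕ) :
    (β ^ n) ^ logb β α = α ^ n := by
  rw [← rpow_natCast, ← rpow_mul hβ.le, mul_comm, rpow_mul hβ.le, rpow_logb hβ hβ1 hα,
    rpow_natCast]

theorem rpow_logb_mem_Icc_pow {α β t : ℝ} (hα : 0 < α) (hα1 : α ≤ 1) (hβ : 1 < β) {m : ℕ}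
    (hmt : β ^ m ≤ t) (htm : t ≤ β ^ (m + 1)) : t ^ logb β α ∈ Set.Icc (α ^ (m + 1)) (α ^ m) := by
  have hβ0 : 0 < β := one_pos.trans hβ
  have hexp : logb β α ≤ 0 := logb_nonpos hβ hα.le hα1
  rw [← pow_rpow_logb hα hβ0 hβ.ne', ← pow_rpow_logb hα hβ0 hβ.ne']
  exact ⟨rpow_le_rpow_of_nonpos ((pow_pos hβ0 m).trans_le hmt) htm hexp,
    rpow_le_rpow_of_nonpos (pow_pos hβ0 m) hmt hexp⟩

namespace expMixtureTerm

variable {α β t : ℝ}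

theorem nonneg (hα0 : 0 ≤ α) (hα1 : α ≤ 1) (k : ℕ) : 0 ≤ expMixtureTerm α β t k := by
  unfold expMixtureTerm
  have : 0 ≤ 1 - α := sub_nonneg.2 hα1
  positivity

theorem le_geometric (hα0 : 0 ≤ α) (hα1 : α ≤ 1) (hβ : 0 ≤ β) (ht : 0 ≤ t) (k : ℕ) :
    expMixtureTerm α β t k ≤ (1 - α) * α ^ k := by
  have : 0 ≤ 1 - α := sub_nonneg.2 hα1
  have hexp : exp (-(β ^ k)⁻¹ * t) ≤ 1 := by
    rw [exp_le_one_iff, neg_mul, neg_nonpos]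
    positivity
  simpa [expMixtureTerm] using
    mul_le_mul_of_nonneg_left hexp (by positivity : 0 ≤ (1 - α) * α ^ k)

theorem summable (hα0 : 0 ≤ α) (hα1 : α < 1) (hβ : 0 ≤ β) (ht : 0 ≤ t) :
    Summable (expMixtureTerm α β t) :=
  Summable.of_nonneg_of_le (nonneg hα0 hα1.le) (le_geometric hα0 hα1.le hβ ht)
    ((summable_geometric_of_lt_one hα0 hα1).mul_left _)

theorem tsum_nat_add_le (hα0 : 0 ≤ α) (hα1 : α < 1) (hβ : 0 ≤ β) (ht : 0 ≤ t) (n : ℕ) :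
    ∑' k, expMixtureTerm α β t (k + n) ≤ α ^ n := by
  have hgeom := (summable_geometric_of_lt_one hα0 hα1).mul_left ((1 - α) * α ^ n)
  calc ∑' k, expMixtureTerm α β t (k + n) ≤ ∑' k, (1 - α) * α ^ n * α ^ k :=
        (summable hα0 hα1 hβ ht).comp_injective (add_left_injective n) |>.tsum_le_tsum
          (fun k => (le_geometric hα0 hα1.le hβ ht (k + n)).trans_eq (by ring)) hgeom
    _ = α ^ n := by
        rw [tsum_mul_left, tsum_geometric_of_lt_one hα0 hα1]
        field_simp [(sub_pos.2 hα1).ne']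

theorem exp_neg_one_mul_le (hα0 : 0 ≤ α) (hα1 : α ≤ 1) (hβ : 0 < β) {n : ℕ}
    (htn : t ≤ β ^ n) : (1 - α) * exp (-1) * α ^ n ≤ expMixtureTerm α β t n := by
  have : 0 ≤ 1 - α := sub_nonneg.2 hα1
  have hexp : exp (-1) ≤ exp (-(β ^ n)⁻¹ * t) := by
    rw [exp_le_exp, neg_mul, neg_le_neg_iff, inv_mul_le_one₀ (by positivity)]
    exact htn
  calc (1 - α) * exp (-1) * α ^ n = (1 - α) * α ^ n * exp (-1) := by ring
    _ ≤ expMixtureTerm α β t n := by unfold expMixtureTerm; gcongr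

theorem le_pow_mul_exp_neg_pow (hα : 0 < α) (hα1 : α ≤ 1) (hβ : 0 < β) {m k : ℕ}
    (hkm : k ≤ m) (hmt : β ^ m ≤ t) :
    expMixtureTerm α β t k ≤ (1 - α) * α ^ m * (α⁻¹ ^ (m - k) * exp (-β ^ (m - k))) := by
  have : 0 ≤ 1 - α := sub_nonneg.2 hα1
  have hα_pow : α ^ k = α ^ m * α⁻¹ ^ (m - k) := by
    rw [inv_pow, ← div_eq_mul_inv, eq_div_iff (by positivity), ← pow_add, Nat.add_sub_cancel' hkm]
  have hexp : exp (-(β ^ k)⁻¹ * t) ≤ exp (-β ^ (m - k)) := by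
    rw [exp_le_exp, neg_mul, neg_le_neg_iff, le_inv_mul_iff₀ (by positivity), ← pow_add,
      Nat.add_sub_cancel' hkm]
    exact hmt
  calc expMixtureTerm α β t k = (1 - α) * α ^ m * α⁻¹ ^ (m - k) * exp (-(β ^ k)⁻¹ * t) := by
        rw [expMixtureTerm, hα_pow]; ring
    _ ≤ (1 - α) * α ^ m * α⁻¹ ^ (m - k) * exp (-β ^ (m - k)) := by gcongr
    _ = _ := by ring

theorem sum_range_le (hα : 0 < α) (hα1 : α ≤ 1) (hβ : 0 < β) {m : ℕ} (hmt : β ^ m ≤ t) :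
    ∑ k ∈ range (m + 1), expMixtureTerm α β t k
      ≤ (1 - α) * α ^ m * ∑ j ∈ range (m + 1), α⁻¹ ^ j * exp (-β ^ j) := by
  calc ∑ k ∈ range (m + 1), expMixtureTerm α β t k
      ≤ ∑ k ∈ range (m + 1), (1 - α) * α ^ m * (α⁻¹ ^ (m - k) * exp (-β ^ (m - k))) :=
        sum_le_sum fun k hk =>
          le_pow_mul_exp_neg_pow hα hα1 hβ (Nat.lt_succ_iff.1 (mem_range.1 hk)) hmt
    _ = _ := by
        rw [← mul_sum, ← sum_range_reflect (fun j => α⁻¹ ^ j * exp (-β ^ j))]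
        rfl

end expMixtureTerm

open expMixtureTerm

variable {α β t : ℝ}

theorem mul_pow_le_tsum_expMixtureTerm (hα0 : 0 ≤ α) (hα1 : α < 1) (hβ : 0 < β) (ht : 0 ≤ t)
    {n : ℕ} (htn : t ≤ β ^ n) : (1 - α) * exp (-1) * α ^ n ≤ ∑' k, expMixtureTerm α β t k :=
  (exp_neg_one_mul_le hα0 hα1.le hβ htn).trans <|
    (summable hα0 hα1 hβ.le ht).le_tsum n fun k _ => nonneg hα0 hα1.le k

theorem tsum_expMixtureTerm_le (hα : 0 < α) (hα1 : α < 1) (hβ : 1 < β) {m : ℕ}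
    (hmt : β ^ m ≤ t) :
    ∑' k, expMixtureTerm α β t k
      ≤ ((1 - α) * ∑' j : ℕ, α⁻¹ ^ j * exp (-β ^ j) + α) * α ^ m := by
  have hβ0 : 0 < β := one_pos.trans hβ
  have ht : 0 ≤ t := (pow_pos hβ0 m).le.trans hmt
  have hpartial : ∑ j ∈ range (m + 1), α⁻¹ ^ j * exp (-β ^ j) ≤ ∑' j : ℕ, α⁻¹ ^ j * exp (-β ^ j) :=
    (summable_pow_mul_exp_neg_pow α⁻¹ hβ).sum_le_tsum _ fun j _ => by positivity
  rw [← (summable hα.le hα1 hβ0.le ht).sum_add_tsum_nat_add (m + 1)]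
  calc _ ≤ (1 - α) * α ^ m * ∑ j ∈ range (m + 1), α⁻¹ ^ j * exp (-β ^ j) + α ^ (m + 1) :=
        add_le_add (sum_range_le hα hα1.le hβ0 hmt) (tsum_nat_add_le hα.le hα1 hβ0.le ht _)
    _ ≤ (1 - α) * α ^ m * ∑' j : ℕ, α⁻¹ ^ j * exp (-β ^ j) + α ^ (m + 1) := by
        have : 0 ≤ 1 - α := sub_nonneg.2 hα1.le
        gcongr
    _ = _ := by ring

/-- The tail `f(t) = Σ_{k≥0}(1-α)α^k e^{-β^{-k}t}` of an exponential with random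
geometric rate is bounded above and below by constant multiples of `t^{-ρ}`,
`ρ = -log α/log β`. -/
theorem tail_polynomial_bounds (α β ρ : ℝ) (hα : 0 < α) (hα1 : α < 1)
    (hβ : 1 < β) (hρ : ρ = -Real.log α / Real.log β) :
    ∃ C₁ C₂ : ℝ, 0 < C₁ ∧ C₁ < C₂ ∧
      ∀ t : ℝ, 1 < t →
        C₁ * Real.rpow t (-ρ)
            ≤ ∑' k : ℕ, (1 - α) * α ^ k * Real.exp (-(β ^ k)⁻¹ * t) ∧
          ∑' k : ℕ, (1 - α) * α ^ k * Real.exp (-(β ^ k)⁻¹ * t)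
            ≤ C₂ * Real.rpow t (-ρ) := by
  have hβ0 : 0 < β := one_pos.trans hβ
  have h1α : 0 < 1 - α := sub_pos.2 hα1
  have hρ' : -ρ = logb β α := by rw [hρ, neg_div, neg_neg]; rfl
  set S := ∑' j : ℕ, α⁻¹ ^ j * exp (-β ^ j)
  have hS : 0 < S := (summable_pow_mul_exp_neg_pow α⁻¹ hβ).tsum_pos (fun j => by positivity) 0
    (by simp [exp_pos])
  refine ⟨(1 - α) * exp (-1) * α, ((1 - α) * S + α) / α, by positivity, ?_, fun t ht => ?_⟩
  · calc (1 - α) * exp (-1) * α < 1 := by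
          have : exp (-1) < 1 := exp_lt_one_iff.2 (by norm_num)
          have : 0 < exp (-1) := exp_pos _
          nlinarith [mul_pos h1α this]
      _ < ((1 - α) * S + α) / α := (one_lt_div hα).2 (lt_add_of_pos_left α (by positivity))
  obtain ⟨m, hmt, htm⟩ := exists_nat_pow_near ht.le hβ
  obtain ⟨hlower, hupper⟩ := hρ' ▸ rpow_logb_mem_Icc_pow hα hα1.le hβ hmt htm.le
  refine ⟨?_, ?_⟩
  · calc (1 - α) * exp (-1) * α * t ^ (-ρ) ≤ (1 - α) * exp (-1) * α * α ^ m := by gcongr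
      _ = (1 - α) * exp (-1) * α ^ (m + 1) := by ring
      _ ≤ _ := mul_pow_le_tsum_expMixtureTerm hα.le hα1 hβ0 (by positivity) htm.le
  · calc _ ≤ ((1 - α) * S + α) * α ^ m := tsum_expMixtureTerm_le hα hα1 hβ hmt
      _ = ((1 - α) * S + α) / α * α ^ (m + 1) := by field_simp; ring
      _ ≤ ((1 - α) * S + α) / α * t ^ (-ρ) := by gcongr
end

section
/- With f(t) = Σ_{k≥0}(1-α)α^k e^{-β^{-k}t}, the Mellin transform f*(z) = ∫_0^∞ t^{z-1} f(t) dt converges for 0 < Re(z) < ρ (ρ = -log α/log β) and equals Γ(z)(1-α)/(1-αβ^z). -/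
/-!
Term by term, `∫₀^∞ t^(z-1) e^(-β^(-k) t) dt = Γ(z) β^(kz)`, so the Mellin transform is
`Γ(z) (1-α) Σₖ (αβ^z)^k`, a geometric series whose ratio has modulus `αβ^(Re z) < 1` exactly when
`Re z < ρ`. Summing and integrating may be interchanged because the integrals of the absolute
values of the terms form the same geometric series at `Re z`.
-/

open MeasureTheory Set Filter Complex

namespace MeasureTheory

variable {α E ι : Type*} [MeasurableSpace α] {μ : Measure α} [NormedAddCommGroup E] [Countable ι]

theorem Integrable.of_hasSum_of_summable_integral_norm {F : ι → α → E} {G : α → E}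
    (hF_int : ∀ i, Integrable (F i) μ) (hF_sum : Summable fun i ↦ ∫ a, ‖F i a‖ ∂μ)
    (hG : ∀ᵐ a ∂μ, HasSum (F · a) (G a)) : Integrable G μ := by
  refine ⟨aestronglyMeasurable_of_tendsto_ae atTop
    (fun s ↦ Finset.aestronglyMeasurable_fun_sum s fun i _ ↦ (hF_int i).1) hG, ?_⟩
  calc ∫⁻ a, ‖G a‖ₑ ∂μ ≤ ∫⁻ a, ∑' i, ‖F i a‖ₑ ∂μ :=
        lintegral_mono_ae <| hG.mono fun a ha ↦ ha.tsum_eq ▸ enorm_tsum_le_tsum_enorm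
    _ = ∑' i, ENNReal.ofReal (∫ a, ‖F i a‖ ∂μ) := by
        rw [lintegral_tsum fun i ↦ (hF_int i).1.enorm]
        simp only [ofReal_integral_norm_eq_lintegral_enorm (hF_int _)]
    _ = ENNReal.ofReal (∑' i, ∫ a, ‖F i a‖ ∂μ) :=
        (ENNReal.ofReal_tsum_of_nonneg (fun i ↦ integral_nonneg fun a ↦ norm_nonneg _) hF_sum).symm
    _ < ⊤ := ENNReal.ofReal_lt_top

end MeasureTheory

section MellinExp

variable {p : ℝ} {s : ℂ}

lemma mellinConvergent_exp_neg_mul (hp : 0 < p) (hs : 0 < s.re) :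
    MellinConvergent (fun t : ℝ ↦ (Real.exp (-p * t) : ℂ)) s := by
  have hGamma : MellinConvergent (fun t : ℝ ↦ (Real.exp (-t) : ℂ)) s :=
    (GammaIntegral_convergent hs).congr_fun (fun t _ ↦ mul_comm _ _) measurableSet_Ioi
  simpa only [neg_mul] using (MellinConvergent.comp_mul_left hp).2 hGamma

lemma integral_norm_cpow_mul_exp_neg_mul_Ioi (hp : 0 < p) (hs : 0 < s.re) :
    ∫ t in Ioi (0 : ℝ), ‖(t : ℂ) ^ (s - 1) * Real.exp (-p * t)‖ = Real.Gamma s.re / p ^ s.re := by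
  rw [div_eq_mul_inv, ← Real.inv_rpow hp.le, ← one_div, mul_comm,
    ← Real.integral_rpow_mul_exp_neg_mul_Ioi hs hp]
  refine setIntegral_congr_fun measurableSet_Ioi fun t ht ↦ ?_
  rw [norm_mul, norm_cpow_eq_rpow_re_of_pos ht, norm_real, Real.norm_of_nonneg (Real.exp_nonneg _),
    sub_re, one_re, neg_mul]

end MellinExp

/-- Convergence counterpart of `hasSum_mellin`, which gives the value of the transform. -/
lemma mellinConvergent_of_hasSum_exp {ι : Type*} [Countable ι] {a : ι → ℂ} {p : ι → ℝ}
    {F : ℝ → ℂ} {s : ℂ} (hp : ∀ i, 0 < p i) (hs : 0 < s.re)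
    (hF : ∀ t ∈ Ioi 0, HasSum (fun i ↦ a i * Real.exp (-p i * t)) (F t))
    (h_sum : Summable fun i ↦ ‖a i‖ / p i ^ s.re) :
    MellinConvergent F s := by
  refine Integrable.of_hasSum_of_summable_integral_norm
    (F := fun i (t : ℝ) ↦ a i * ((t : ℂ) ^ (s - 1) * Real.exp (-p i * t))) (fun i ↦ ?_) ?_ ?_
  · exact Integrable.const_mul (mellinConvergent_exp_neg_mul (hp i) hs) (a i)
  · have h_norm (i : ι) : ∫ t in Ioi (0 : ℝ), ‖a i * ((t : ℂ) ^ (s - 1) * Real.exp (-p i * t))‖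
        = Real.Gamma s.re * (‖a i‖ / p i ^ s.re) := by
      rw [mul_div_left_comm, ← integral_norm_cpow_mul_exp_neg_mul_Ioi (hp i) hs,
        ← integral_const_mul]
      simp only [norm_mul (a i)]
    simpa only [h_norm] using h_sum.mul_left _
  · refine (ae_restrict_iff' measurableSet_Ioi).2 (ae_of_all _ fun t ht ↦ ?_)
    simpa only [smul_eq_mul, mul_left_comm] using (hF t ht).mul_left ((t : ℂ) ^ (s - 1))

lemma Complex.ofReal_pow_cpow_comm {x : ℝ} (hx : 0 ≤ x) (n : ℕ) (z : ℂ) :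
    ((x : ℂ) ^ n) ^ z = ((x : ℂ) ^ z) ^ n := by
  have h_arg : (n : ℝ) * (x : ℂ).arg = 0 := by rw [arg_ofReal_of_nonneg hx, mul_zero]
  rw [← cpow_nat_mul' (by linarith [Real.pi_pos]) (by linarith [Real.pi_pos]), cpow_nat_mul]

section GeometricSeries

variable {α β : ℝ} (c : ℝ)

lemma mul_rpow_lt_one_of_lt_neg_log_div_log {σ : ℝ} (hα : 0 < α) (hβ : 1 < β)
    (hσ : σ < -Real.log α / Real.log β) : α * β ^ σ < 1 := by
  have hβ0 : 0 < β := one_pos.trans hβ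
  have h_log : Real.log (α * β ^ σ) < 0 := by
    rw [Real.log_mul hα.ne' (by positivity), Real.log_rpow hβ0]
    have := (lt_div_iff₀ (Real.log_pos hβ)).1 hσ
    linarith
  exact (Real.log_neg_iff (by positivity)).1 h_log

lemma summable_mul_pow_mul_exp_neg_mul {p : ℕ → ℝ} {t : ℝ} (hα0 : 0 ≤ α) (hα1 : α < 1)
    (hp : ∀ k, 0 ≤ p k) (ht : 0 ≤ t) :
    Summable fun k ↦ c * α ^ k * Real.exp (-p k * t) := by
  refine Summable.of_norm_bounded ((summable_geometric_of_lt_one hα0 hα1).mul_left |c|)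
    fun k ↦ ?_
  have h_exp : Real.exp (-p k * t) ≤ 1 :=
    Real.exp_le_one_iff.2 (mul_nonpos_of_nonpos_of_nonneg (neg_nonpos.2 (hp k)) ht)
  rw [norm_mul, norm_mul, norm_pow, Real.norm_of_nonneg hα0, Real.norm_eq_abs,
    Real.norm_of_nonneg (Real.exp_nonneg _)]
  exact mul_le_of_le_one_right (by positivity) h_exp

lemma summable_norm_mul_pow_div_inv_pow_rpow {σ : ℝ} (hα : 0 ≤ α) (hβ : 0 < β)
    (hq : α * β ^ σ < 1) :
    Summable fun k : ℕ ↦ ‖((c * α ^ k : ℝ) : ℂ)‖ / (β ^ k)⁻¹ ^ σ := by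
  have h_term (k : ℕ) : ‖((c * α ^ k : ℝ) : ℂ)‖ / (β ^ k)⁻¹ ^ σ = |c| * (α * β ^ σ) ^ k := by
    rw [norm_real, Real.norm_eq_abs, abs_mul, abs_of_nonneg (pow_nonneg hα k),
      Real.inv_rpow (pow_nonneg hβ.le k), ← Real.rpow_pow_comm hβ.le, div_inv_eq_mul, mul_pow,
      mul_assoc]
  simpa only [h_term] using (summable_geometric_of_lt_one (by positivity) hq).mul_left |c|

lemma hasSum_mul_pow_div_inv_pow_cpow (w : ℂ) {z : ℂ} (hα : 0 ≤ α) (hβ : 0 < β)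
    (hq : α * β ^ z.re < 1) :
    HasSum (fun k : ℕ ↦ w * ((c * α ^ k : ℝ) : ℂ) / (((β ^ k)⁻¹ : ℝ) : ℂ) ^ z)
      (w * c / (1 - α * β ^ z)) := by
  have h_norm : ‖(α : ℂ) * (β : ℂ) ^ z‖ < 1 := by
    rwa [norm_mul, norm_real, Real.norm_of_nonneg hα, norm_cpow_eq_rpow_re_of_pos hβ]
  have h_term (k : ℕ) : w * ((c * α ^ k : ℝ) : ℂ) / (((β ^ k)⁻¹ : ℝ) : ℂ) ^ z
      = w * c * (α * β ^ z) ^ k := by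
    rw [ofReal_inv, inv_cpow_ofReal_nonneg (by positivity), ofReal_pow,
      Complex.ofReal_pow_cpow_comm hβ.le, div_inv_eq_mul, mul_pow]
    push_cast
    ring
  simpa only [h_term, div_eq_mul_inv] using (hasSum_geometric_of_norm_lt_one h_norm).mul_left _

end GeometricSeries

/-- The Mellin transform of `f(t) = Σ_{k≥0}(1-α)α^k e^{-β^{-k}t}` converges on
the strip `0 < Re z < ρ` (`ρ = -log α/log β`) and equals `Γ(z)(1-α)/(1-αβ^z)`. -/
theorem mellin_transform_of_tail (α β ρ : ℝ) (hα : 0 < α) (hα1 : α < 1)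
    (hβ : 1 < β) (hρ : ρ = -Real.log α / Real.log β)
    (f : ℝ → ℝ)
    (hf : ∀ t : ℝ, f t = ∑' k : ℕ, (1 - α) * α ^ k * Real.exp (-(β ^ k)⁻¹ * t)) :
    ∀ z : ℂ, 0 < z.re → z.re < ρ →
      IntegrableOn (fun t : ℝ => (t : ℂ) ^ (z - 1) * (f t : ℂ)) (Set.Ioi 0) volume ∧
      ∫ t in Set.Ioi (0 : ℝ), (t : ℂ) ^ (z - 1) * (f t : ℂ)
        = Complex.Gamma z * (1 - α) / (1 - α * (β : ℂ) ^ z) := by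
  intro z hz0 hzρ
  have hβ0 : 0 < β := one_pos.trans hβ
  have hp (k : ℕ) : 0 < (β ^ k)⁻¹ := by positivity
  have hq : α * β ^ z.re < 1 := mul_rpow_lt_one_of_lt_neg_log_div_log hα hβ (hρ ▸ hzρ)
  have hF (t : ℝ) (ht : t ∈ Ioi 0) : HasSum
      (fun k : ℕ ↦ (((1 - α) * α ^ k : ℝ) : ℂ) * Real.exp (-(β ^ k)⁻¹ * t)) (f t) := by
    rw [hf t]
    exact_mod_cast Complex.hasSum_ofReal.2 (summable_mul_pow_mul_exp_neg_mul (1 - α) hα.le hα1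
      (fun k ↦ (hp k).le) ht.le).hasSum
  have h_sum := summable_norm_mul_pow_div_inv_pow_rpow (1 - α) hα.le hβ0 hq
  refine ⟨mellinConvergent_of_hasSum_exp hp hz0 hF h_sum, ?_⟩
  have h_value := hasSum_mul_pow_div_inv_pow_cpow (1 - α) (Gamma z) hα.le hβ0 hq
  rw [ofReal_sub, ofReal_one] at h_value
  exact (hasSum_mellin (fun k ↦ Or.inr (hp k)) hz0 hF h_sum).unique h_value
end

section
/- There exists a constant c > 0 such that for all t ≥ 1, P[N > t] ≥ c t^{-ρ}, where N is the mixed geometric random variable: conditionally on geometric k (parameter 1-α) and on the event A (which has P_k[A] ≥ (β-1)/β), N is geometric with parameter (β-1)/(β^k - 1). -/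
/-!
Since `α = β ^ (-ρ)`, the geometric weight `α ^ k` equals `(β ^ k) ^ (-ρ)`. Given `n`, pick the
first `k ≥ 1` with `β ^ k > 2 (β - 1) n + 1`; then `β ^ k = O(n)`, so `α ^ k ≥ const · n ^ (-ρ)`,
while the success probability `(β - 1)/(β ^ k - 1)` is at most `1/(2n)`, so by Bernoulli's
inequality `N > n` has conditional probability at least `1/2` on `A ∩ {K = k}`.
-/

open MeasureTheory

lemma rpow_neg_eq_of_eq_neg_log_div_log {α β ρ : ℝ} (hα : 0 < α) (hβ : 1 < β)
    (hρ : ρ = -Real.log α / Real.log β) : β ^ (-ρ) = α := by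
  have hlogβ : Real.log β ≠ 0 := (Real.log_pos hβ).ne'
  rw [Real.rpow_def_of_pos (by linarith), hρ, neg_div, neg_neg, mul_div_cancel₀ _ hlogβ,
    Real.exp_log hα]

lemma pow_eq_pow_rpow_neg {α β ρ : ℝ} (hα : 0 < α) (hβ : 1 < β)
    (hρ : ρ = -Real.log α / Real.log β) (k : ℕ) : α ^ k = (β ^ k) ^ (-ρ) := by
  rw [← rpow_neg_eq_of_eq_neg_log_div_log hα hβ hρ, Real.rpow_pow_comm (by linarith)]

lemma exists_pow_gt_and_pow_le_mul {β x : ℝ} (hβ : 1 < β) (hx : 1 ≤ x) :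
    ∃ k : ℕ, 1 ≤ k ∧ x < β ^ k ∧ β ^ k ≤ β * x := by
  obtain ⟨m, hm_le, hm_lt⟩ := exists_nat_pow_near hx hβ
  refine ⟨m + 1, Nat.le_add_left 1 m, hm_lt, ?_⟩
  rw [pow_succ']
  exact mul_le_mul_of_nonneg_left hm_le (by linarith)

lemma div_pow_sub_one_le_one {β : ℝ} (hβ : 1 < β) {k : ℕ} (hk : 1 ≤ k) :
    (β - 1) / (β ^ k - 1) ≤ 1 :=
  div_le_one_of_le₀ (by linarith [le_self_pow₀ hβ.le (Nat.one_le_iff_ne_zero.mp hk)])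
    (by linarith [one_le_pow₀ (M₀ := ℝ) hβ.le (n := k)])

lemma one_half_le_one_sub_div_pow {β : ℝ} (hβ : 1 < β) {k : ℕ} (hk : 1 ≤ k) (n : ℕ)
    (hβk : 2 * (β - 1) * n + 1 ≤ β ^ k) : 1 / 2 ≤ (1 - (β - 1) / (β ^ k - 1)) ^ n := by
  have hβk_pos : 0 < β ^ k - 1 := by linarith [one_lt_pow₀ hβ (Nat.one_le_iff_ne_zero.mp hk)]
  have hp_nonneg : 0 ≤ (β - 1) / (β ^ k - 1) := div_nonneg (by linarith) hβk_pos.le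
  have hnp : n * ((β - 1) / (β ^ k - 1)) ≤ 1 / 2 := by
    rw [mul_div_assoc', div_le_div_iff₀ hβk_pos two_pos]
    linarith
  have hp_le_one := div_pow_sub_one_le_one hβ hk
  calc 1 / 2 ≤ 1 + n * -((β - 1) / (β ^ k - 1)) := by linarith
    _ ≤ (1 + -((β - 1) / (β ^ k - 1))) ^ n := one_add_mul_le_pow (by linarith) n
    _ = (1 - (β - 1) / (β ^ k - 1)) ^ n := by rw [← sub_eq_add_neg]

lemma div_le_div_sub_zpow {β : ℝ} (hβ : 1 < β) {k : ℕ} (hk : 1 ≤ k) :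
    (β - 1) / β ≤ (β - 1) / (β - β ^ (1 - (k : ℤ))) := by
  have hzpow_le_one : β ^ (1 - (k : ℤ)) ≤ 1 := zpow_le_one_of_nonpos₀ hβ.le (by omega)
  exact div_le_div_of_nonneg_left (by linarith) (by linarith)
    (by linarith [zpow_pos (by linarith : (0 : ℝ) < β) (1 - (k : ℤ))])

section MixedGeometric

variable {α β : ℝ} {Ω : Type*} [MeasurableSpace Ω] {μ : Measure Ω} [IsFiniteMeasure μ]
  {K N : Ω → ℕ} {A : Set Ω}

lemma le_toReal_measure_tail (hα : 0 ≤ α) (hα1 : α ≤ 1) (hβ : 1 < β)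
    (hK : ∀ j : ℕ, μ {ω | K ω = j} = ENNReal.ofReal ((1 - α) * α ^ j))
    (hA : ∀ j : ℕ, 1 ≤ j →
      μ (A ∩ {ω | K ω = j})
        = ENNReal.ofReal ((β - 1) / (β - β ^ (1 - (j : ℤ)))) * μ {ω | K ω = j})
    (hN : ∀ j : ℕ, 1 ≤ j → ∀ n : ℕ,
      μ ({ω | n < N ω} ∩ A ∩ {ω | K ω = j})
        = ENNReal.ofReal ((1 - (β - 1) / (β ^ j - 1)) ^ n) * μ (A ∩ {ω | K ω = j}))
    {k : ℕ} (hk : 1 ≤ k) (n : ℕ) :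
    (1 - (β - 1) / (β ^ k - 1)) ^ n * ((β - 1) / (β - β ^ (1 - (k : ℤ))) * ((1 - α) * α ^ k))
      ≤ (μ {ω | n < N ω}).toReal := by
  have hq_nonneg : 0 ≤ (β - 1) / (β - β ^ (1 - (k : ℤ))) :=
    (div_nonneg (by linarith) (by linarith)).trans (div_le_div_sub_zpow hβ hk)
  have hp_le_one := div_pow_sub_one_le_one hβ hk
  calc _ = (μ ({ω | n < N ω} ∩ A ∩ {ω | K ω = k})).toReal := by
        rw [hN k hk n, hA k hk, hK k, ENNReal.toReal_mul, ENNReal.toReal_mul,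
          ENNReal.toReal_ofReal (pow_nonneg (by linarith) n), ENNReal.toReal_ofReal hq_nonneg,
          ENNReal.toReal_ofReal (mul_nonneg (by linarith) (pow_nonneg hα k))]
    _ ≤ (μ {ω | n < N ω}).toReal :=
        measureReal_mono (Set.inter_subset_left.trans Set.inter_subset_left)

end MixedGeometric

theorem tail_lower_bound_N_general (α β ρ : ℝ) (hα : 0 < α) (hα1 : α < 1)
    (hβ : 1 < β) (hρ : ρ = -Real.log α / Real.log β)
    (Ω : Type*) [MeasurableSpace Ω] (μ : Measure Ω) [IsProbabilityMeasure μ]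
    (K : Ω → ℕ) (N : Ω → ℕ) (A : Set Ω)
    (hK : ∀ j : ℕ, μ {ω | K ω = j} = ENNReal.ofReal ((1 - α) * α ^ j))
    (hA : ∀ j : ℕ, 1 ≤ j →
      μ (A ∩ {ω | K ω = j})
        = ENNReal.ofReal ((β - 1) / (β - β ^ (1 - (j : ℤ)))) * μ {ω | K ω = j})
    (hN : ∀ j : ℕ, 1 ≤ j → ∀ n : ℕ,
      μ ({ω | n < N ω} ∩ A ∩ {ω | K ω = j})
        = ENNReal.ofReal ((1 - (β - 1) / (β ^ j - 1)) ^ n) * μ (A ∩ {ω | K ω = j})) :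
    ∃ c : ℝ, 0 < c ∧ ∀ n : ℕ, 1 ≤ n →
      c * Real.rpow (n : ℝ) (-ρ) ≤ (μ {ω | n < N ω}).toReal := by
  have hρ_nonneg : 0 ≤ ρ :=
    hρ ▸ div_nonneg (neg_nonneg.mpr (Real.log_nonpos hα.le hα1.le)) (Real.log_pos hβ).le
  have hβ0 : 0 < β := by linarith
  have hβ1 : 0 < β - 1 := by linarith
  have hβ2 : 0 < 2 * β - 1 := by linarith
  have hα1' : 0 < 1 - α := by linarith
  refine ⟨1 / 2 * ((β - 1) / β) * ((1 - α) * (β * (2 * β - 1)) ^ (-ρ)), by positivity,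
    fun n hn ↦ ?_⟩
  have hn1 : (1 : ℝ) ≤ n := by exact_mod_cast hn
  obtain ⟨k, hk, hβk_gt, hβk_le⟩ :=
    exists_pow_gt_and_pow_le_mul hβ (x := 2 * (β - 1) * n + 1) (by nlinarith)
  have hαk : (β * (2 * β - 1) * n) ^ (-ρ) ≤ α ^ k := by
    rw [pow_eq_pow_rpow_neg hα hβ hρ k]
    exact Real.rpow_le_rpow_of_nonpos (by positivity) (hβk_le.trans (by nlinarith))
      (neg_nonpos.mpr hρ_nonneg)
  have hp := one_half_le_one_sub_div_pow hβ hk n hβk_gt.le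
  have hq := div_le_div_sub_zpow hβ hk
  calc _ = 1 / 2 * ((β - 1) / β * ((1 - α) * (β * (2 * β - 1) * n) ^ (-ρ))) := by
        rw [Real.rpow_eq_pow, Real.mul_rpow (x := β * (2 * β - 1)) (by positivity) (by positivity)]
        ring
    _ ≤ _ := by gcongr ?_ * (?_ * (_ * ?_)); exact (by positivity : 0 ≤ (β - 1) / β).trans hq
    _ ≤ _ := le_toReal_measure_tail hα.le hα1.le hβ hK hA hN hk n

/-- Lower bound for the tail of the mixed geometric number of excursions `N`:
with `K` geometric (parameter `1-α`), `P_k[A] = (β-1)/(β-β^{1-k})` and,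
conditionally on `A` and `K = k ≥ 1`, `P[N > n] = (1-(β-1)/(β^k-1))^n`, there is
`c > 0` with `P[N > n] ≥ c n^{-ρ}` for all `n ≥ 1`, where `ρ = -log α/log β`. -/
theorem tail_lower_bound_N (α β ρ : ℝ) (hα : 0 < α) (hα1 : α < 1)
    (hβ : 1 < β) (hρ : ρ = -Real.log α / Real.log β)
    (Ω : Type*) [MeasurableSpace Ω] (μ : Measure Ω) [IsProbabilityMeasure μ]
    (K : Ω → ℕ) (N : Ω → ℕ) (A : Set Ω)
    (hKm : Measurable K) (hNm : Measurable N) (hAm : MeasurableSet A)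
    (hK : ∀ j : ℕ, μ {ω | K ω = j} = ENNReal.ofReal ((1 - α) * α ^ j))
    (hA : ∀ j : ℕ, 1 ≤ j →
      μ (A ∩ {ω | K ω = j})
        = ENNReal.ofReal ((β - 1) / (β - β ^ (1 - (j : ℤ)))) * μ {ω | K ω = j})
    (hN : ∀ j : ℕ, 1 ≤ j → ∀ n : ℕ,
      μ ({ω | n < N ω} ∩ A ∩ {ω | K ω = j})
        = ENNReal.ofReal ((1 - (β - 1) / (β ^ j - 1)) ^ n) * μ (A ∩ {ω | K ω = j})) :
    ∃ c : ℝ, 0 < c ∧ ∀ n : ℕ, 1 ≤ n →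
      c * Real.rpow (n : ℝ) (-ρ) ≤ (μ {ω | n < N ω}).toReal :=
  tail_lower_bound_N_general α β ρ hα hα1 hβ hρ Ω μ K N A hK hA hN
end

section
/- Let X be the conductance-β^l walk on {0,...,k} started at 0 (β > 1, k ≥ 1), T_in the hitting time of k, and let the environment size k be geometric with parameter 1-α (0 < α < 1). Then there exists ε > 0 such that P[T_in > t] ≤ e^{-εt} + α^{t(β-1)/(2(β+1))} for all t ≥ 1; in particular P[T_in > t] decays exponentially in t. -/
/-!
Fix the trap size `j` and `θ ≥ 0`. Below `j` the walk steps right with probability `β/(1+β)`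
(from `0` it always does), so `V(l) = e^{θ(j-l)}` satisfies the drift inequality
`E[V(X₁); X₁ ≠ j | X₀ = l] ≤ λ(θ) V(l)` with `λ(θ) = (β e^{-θ} + e^θ)/(1+β)`. Iterating along
paths gives `P[T_in > t] ≤ λ(θ)^t e^{θj}`, and `λ(θ) ≤ e^{θ² - mθ}` with `m = (β-1)/(β+1)`, so for
`θ = m/4` this is at most `e^{-m²t/16}` as soon as `j ≤ tm/2`. Traps larger than `tm/2` have
probability at most `α^{tm/2}` under the geometric law.
-/

open MeasureTheory
open scoped ENNReal

section SurvivalSum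

variable {α : Type*} (q : α → α → ℝ≥0∞) (S : Set α)

noncomputable def survivalSum (V : α → ℝ≥0∞) : ℕ → α → ℝ≥0∞
  | 0 => S.indicator V
  | n + 1 => S.indicator fun a => ∑' b, q a b * survivalSum V n b

variable {q S}

theorem tsum_path_eq_survivalSum [DecidableEq α] [DecidablePred (· ∈ S)] (V : α → ℝ≥0∞)
    (n : ℕ) (a : α) :
    ∑' y : Fin (n + 1) → α, (if y 0 = a ∧ ∀ i, y i ∈ S then
      (∏ i : Fin n, q (y i.castSucc) (y i.succ)) * V (y (Fin.last n)) else 0) =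
      survivalSum q S V n a := by
  induction n generalizing a with
  | zero =>
    rw [← (Equiv.funUnique (Fin 1) α).symm.tsum_eq]
    simp [survivalSum, Set.indicator, ite_and, tsum_ite_eq]
  | succ n ih =>
    rw [← (Fin.consEquiv fun _ => α).tsum_eq, ENNReal.tsum_prod']
    simp only [Fin.consEquiv_apply, Fin.cons_zero, Fin.forall_fin_succ (n := n + 1), Fin.cons_succ,
      Fin.prod_univ_succ, Fin.castSucc_zero, ← Fin.succ_castSucc, ← Fin.succ_last, ite_and]
    rw [ENNReal.tsum_comm]
    simp only [tsum_ite_eq, survivalSum, ← ih, Set.indicator, ← ENNReal.tsum_mul_left]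
    split_ifs with ha
    · rw [ENNReal.tsum_comm]
      simp only [mul_ite, mul_zero, ite_and, tsum_ite_eq', mul_assoc]
    · exact tsum_zero

theorem survivalSum_mono {V W : α → ℝ≥0∞} (h : V ≤ W) (n : ℕ) :
    survivalSum q S V n ≤ survivalSum q S W n := by
  induction n with
  | zero => exact fun a => Set.indicator_le_indicator (h a)
  | succ n ih => exact fun a => Set.indicator_le_indicator <|
      ENNReal.tsum_le_tsum fun b => mul_le_mul_right (ih b) _

theorem survivalSum_le_of_drift {V : α → ℝ≥0∞} {r : ℝ≥0∞}
    (hV : ∀ a ∈ S, ∑' b, q a b * S.indicator V b ≤ r * V a) (n : ℕ) (a : α) :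
    survivalSum q S V n a ≤ r ^ n * S.indicator V a := by
  induction n generalizing a with
  | zero => simp [survivalSum]
  | succ n ih =>
    by_cases ha : a ∈ S
    · calc survivalSum q S V (n + 1) a = ∑' b, q a b * survivalSum q S V n b := by
            simp [survivalSum, ha]
        _ ≤ ∑' b, q a b * (r ^ n * S.indicator V b) := by gcongr with b; exact ih b
        _ = r ^ n * ∑' b, q a b * S.indicator V b := by
            rw [← ENNReal.tsum_mul_left]; simp only [mul_left_comm]
        _ ≤ r ^ n * (r * V a) := by gcongr; exact hV a ha
        _ = r ^ (n + 1) * S.indicator V a := by simp [ha, pow_succ, mul_assoc]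
    · simp [survivalSum, ha]

end SurvivalSum

theorem measure_forall_mem_le_survivalSum {α : Type*} [Countable α] [MeasurableSpace α]
    [DecidableEq α] {μ : Measure (ℕ → α)}
    {q : α → α → ℝ≥0∞} {a : α}
    (hcyl : ∀ n (x : ℕ → α), μ {ω | ∀ i ≤ n, ω i = x i} =
      (if x 0 = a then 1 else 0) * ∏ i ∈ Finset.range n, q (x i) (x (i + 1)))
    (S : Set α) (n : ℕ) :
    μ {ω | ∀ i ≤ n, ω i ∈ S} ≤ survivalSum q S 1 n a := by
  classical
  let extend (y : Fin (n + 1) → α) (i : ℕ) : α := y ⟨min i n, by omega⟩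
  have hcover : {ω | ∀ i ≤ n, ω i ∈ S} ⊆
      ⋃ y : {y : Fin (n + 1) → α | ∀ i, y i ∈ S}, {ω : ℕ → α | ∀ i ≤ n, ω i = extend y i} := by
    intro ω hω
    refine Set.mem_iUnion.2 ⟨⟨fun i => ω i, fun i => hω i (by omega)⟩, fun i hi => ?_⟩
    simp [extend, Nat.min_eq_left hi]
  calc μ {ω | ∀ i ≤ n, ω i ∈ S}
      ≤ ∑' y : {y : Fin (n + 1) → α | ∀ i, y i ∈ S}, μ {ω | ∀ i ≤ n, ω i = extend y i} :=
        (measure_mono hcover).trans (measure_iUnion_le _)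
    _ = ∑' y : Fin (n + 1) → α,
          if y 0 = a ∧ ∀ i, y i ∈ S then ∏ i : Fin n, q (y i.castSucc) (y i.succ) else 0 := by
        rw [tsum_subtype _ fun y => μ {ω | ∀ i ≤ n, ω i = extend y i}]
        refine tsum_congr fun y => ?_
        have hprod : ∏ i ∈ Finset.range n, q (extend y i) (extend y (i + 1)) =
            ∏ i : Fin n, q (y i.castSucc) (y i.succ) := by
          rw [← Fin.prod_univ_eq_prod_range]
          refine Finset.prod_congr rfl fun i _ => ?_
          simp only [extend, Nat.min_eq_left i.is_lt.le, Nat.min_eq_left i.is_lt]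
          rfl
        simp [Set.indicator, hcyl, hprod, extend, ← ite_and, and_comm]
    _ = survivalSum q S 1 n a := by simpa using tsum_path_eq_survivalSum (q := q) (S := S) 1 n a

noncomputable def trapKernel (β : ℝ) (j : ℕ) (l m : ℤ) : ℝ :=
  if l = 0 then (if m = 1 then 1 else 0)
  else if l = (j : ℤ) then (if m = (j : ℤ) - 1 then 1 else 0)
  else if m = l + 1 then β / (1 + β)
  else if m = l - 1 then 1 / (1 + β) else 0

theorem trapKernel_nonneg {β : ℝ} (hβ : 0 < β) (j : ℕ) (l m : ℤ) : 0 ≤ trapKernel β j l m := by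
  unfold trapKernel; split_ifs <;> positivity

/-- `E[e^{-θξ}]` for a step `ξ = ±1` with `P[ξ = 1] = β/(1+β)`. -/
noncomputable def stepLaplace (β θ : ℝ) : ℝ := (β * Real.exp (-θ) + Real.exp θ) / (1 + β)

theorem stepLaplace_pos {β : ℝ} (hβ : 0 < β) (θ : ℝ) : 0 < stepLaplace β θ := by
  unfold stepLaplace; positivity

/-- The value `⊤` off `{0, …, j}` makes the drift inequality trivial there, so no argument that
the walk stays in `{0, …, j}` is needed. -/
noncomputable def trapLyapunov (θ : ℝ) (j : ℕ) (m : ℤ) : ℝ≥0∞ :=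
  if 0 ≤ m ∧ m ≤ j then ENNReal.ofReal (Real.exp (θ * (j - m))) else ⊤

theorem one_le_trapLyapunov {θ : ℝ} (hθ : 0 ≤ θ) (j : ℕ) (m : ℤ) : 1 ≤ trapLyapunov θ j m := by
  unfold trapLyapunov
  split_ifs with hm
  · refine ENNReal.one_le_ofReal.2 (Real.one_le_exp (mul_nonneg hθ ?_))
    have : (m : ℝ) ≤ j := by exact_mod_cast hm.2
    linarith
  · exact le_top

theorem stepLaplace_zero {β : ℝ} (hβ : 1 + β ≠ 0) : stepLaplace β 0 = 1 := by
  rw [stepLaplace, neg_zero, Real.exp_zero, mul_one, add_comm, div_self hβ]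

theorem exp_neg_le_stepLaplace {β θ : ℝ} (hβ : 0 < β) (hθ : 0 ≤ θ) :
    Real.exp (-θ) ≤ stepLaplace β θ := by
  rw [stepLaplace, le_div_iff₀ (by positivity)]
  nlinarith [Real.exp_le_exp.2 (neg_le_self hθ)]

theorem trapLyapunov_drift {β θ : ℝ} (hβ : 0 < β) (hθ : 0 ≤ θ) (j : ℕ) {l : ℤ} (hlj : l ≠ j) :
    ∑' m, ENNReal.ofReal (trapKernel β j l m) * {m : ℤ | m ≠ j}.indicator (trapLyapunov θ j) m ≤
      ENNReal.ofReal (stepLaplace β θ) * trapLyapunov θ j l := by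
  by_cases hl : 0 ≤ l ∧ l ≤ j
  swap
  · rw [trapLyapunov, if_neg hl, ENNReal.mul_top (ENNReal.ofReal_pos.2 (stepLaplace_pos hβ θ)).ne']
    exact le_top
  have hV : ∀ m : ℤ, 0 ≤ m → m ≤ j →
      trapLyapunov θ j m = ENNReal.ofReal (Real.exp (θ * (j - m))) := fun m h0 hj => by
    simp [trapLyapunov, h0, hj]
  rw [hV l hl.1 hl.2]
  refine (ENNReal.tsum_le_tsum fun m => mul_le_mul_right (Set.indicator_le_self _ _ m) _).trans ?_
  rcases hl.1.eq_or_lt with rfl | hl0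
  · have hj : (1 : ℤ) ≤ j := by omega
    rw [tsum_eq_single 1 fun m hm => by simp [trapKernel, hm], hV 1 zero_le_one hj]
    simp only [trapKernel, if_true, ENNReal.ofReal_one, one_mul]
    rw [← ENNReal.ofReal_mul (stepLaplace_pos hβ θ).le]
    refine ENNReal.ofReal_le_ofReal ?_
    calc Real.exp (θ * (j - (1 : ℤ))) = Real.exp (-θ) * Real.exp (θ * (j - (0 : ℤ))) := by
          rw [← Real.exp_add]; push_cast; ring_nf
      _ ≤ stepLaplace β θ * Real.exp (θ * (j - (0 : ℤ))) := by
          gcongr; exact exp_neg_le_stepLaplace hβ hθ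
  · have hk : ∀ m, trapKernel β j l m =
        if m = l + 1 then β / (1 + β) else if m = l - 1 then 1 / (1 + β) else 0 := by
      simp [trapKernel, hl0.ne', hlj]
    rw [tsum_eq_sum (s := {l + 1, l - 1}) fun m hm => ?_, Finset.sum_pair (by omega)]
    · rw [hk, hk, if_pos rfl, if_neg (by omega), if_pos rfl, hV (l + 1) (by omega) (by omega),
        hV (l - 1) (by omega) (by omega), ← ENNReal.ofReal_mul (by positivity),
        ← ENNReal.ofReal_mul (by positivity), ← ENNReal.ofReal_add (by positivity) (by positivity),
        ← ENNReal.ofReal_mul (stepLaplace_pos hβ θ).le]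
      refine ENNReal.ofReal_le_ofReal (le_of_eq ?_)
      have h1 : Real.exp (θ * (j - (l + 1 : ℤ))) = Real.exp (-θ) * Real.exp (θ * (j - l)) := by
        rw [← Real.exp_add]; push_cast; ring_nf
      have h2 : Real.exp (θ * (j - (l - 1 : ℤ))) = Real.exp θ * Real.exp (θ * (j - l)) := by
        rw [← Real.exp_add]; push_cast; ring_nf
      rw [h1, h2, stepLaplace]
      ring
    · simp only [Finset.mem_insert, Finset.mem_singleton, not_or] at hm
      simp [hk, hm.1, hm.2]

theorem stepLaplace_le_exp {β θ : ℝ} (hβ : 0 < β) (hθ : |θ| ≤ 1) :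
    stepLaplace β θ ≤ Real.exp (θ ^ 2 - (β - 1) / (β + 1) * θ) := by
  have hpos : Real.exp θ ≤ 1 + θ + θ ^ 2 := by
    have := (abs_le.1 (Real.abs_exp_sub_one_sub_id_le hθ)).2; linarith
  have hneg : Real.exp (-θ) ≤ 1 - θ + θ ^ 2 := by
    have := (abs_le.1 (Real.abs_exp_sub_one_sub_id_le (abs_neg θ ▸ hθ))).2; nlinarith
  calc stepLaplace β θ ≤ (β * (1 - θ + θ ^ 2) + (1 + θ + θ ^ 2)) / (1 + β) := by
        rw [stepLaplace]; gcongr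
    _ = θ ^ 2 - (β - 1) / (β + 1) * θ + 1 := by field_simp; ring
    _ ≤ _ := Real.add_one_le_exp _

def IsTrapWalkLaw (β : ℝ) (j : ℕ) (μ : Measure (ℕ → ℤ)) : Prop :=
  ∀ n (x : ℕ → ℤ), μ {ω | ∀ i ≤ n, ω i = x i} = (if x 0 = 0 then 1 else 0) *
    ENNReal.ofReal (∏ i ∈ Finset.range n, trapKernel β j (x i) (x (i + 1)))

namespace IsTrapWalkLaw

variable {β : ℝ} {j : ℕ} {μ : Measure (ℕ → ℤ)}

theorem measure_lt_hittingTime_le (hμ : IsTrapWalkLaw β j μ) (hβ : 0 < β) {θ : ℝ} (hθ : 0 ≤ θ)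
    (t : ℕ) : μ {ω | t < sInf {s : ℕ | ω s = (j : ℤ)}} ≤
      ENNReal.ofReal (stepLaplace β θ) ^ t * ENNReal.ofReal (Real.exp (θ * j)) := by
  have hcyl : ∀ n (x : ℕ → ℤ), μ {ω | ∀ i ≤ n, ω i = x i} = (if x 0 = 0 then 1 else 0) *
      ∏ i ∈ Finset.range n, ENNReal.ofReal (trapKernel β j (x i) (x (i + 1))) := fun n x => by
    rw [hμ, ENNReal.ofReal_prod_of_nonneg fun i _ => trapKernel_nonneg hβ j _ _]
  calc μ {ω | t < sInf {s : ℕ | ω s = (j : ℤ)}}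
      ≤ μ {ω | ∀ i ≤ t, ω i ∈ {m : ℤ | m ≠ j}} :=
        measure_mono fun ω hω i hi hij => (Nat.sInf_le hij).not_gt (hω.trans_le' hi)
    _ ≤ survivalSum _ _ 1 t 0 := measure_forall_mem_le_survivalSum hcyl _ t
    _ ≤ survivalSum _ _ (trapLyapunov θ j) t 0 :=
        survivalSum_mono (one_le_trapLyapunov hθ j) t 0
    _ ≤ _ := survivalSum_le_of_drift (fun l hl => trapLyapunov_drift hβ hθ j hl) t 0
    _ ≤ ENNReal.ofReal (stepLaplace β θ) ^ t * trapLyapunov θ j 0 := by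
        gcongr; exact Set.indicator_le_self _ _ _
    _ = _ := by simp [trapLyapunov]

theorem measure_lt_hittingTime_le_one (hμ : IsTrapWalkLaw β j μ) (hβ : 0 < β) (t : ℕ) :
    μ {ω | t < sInf {s : ℕ | ω s = (j : ℤ)}} ≤ 1 := by
  simpa [stepLaplace_zero (by linarith : 1 + β ≠ 0)] using hμ.measure_lt_hittingTime_le hβ le_rfl t

theorem measure_lt_hittingTime_le_exp (hμ : IsTrapWalkLaw β j μ) (hβ : 1 < β) {t : ℕ}
    (hj : (j : ℝ) ≤ t * ((β - 1) / (β + 1)) / 2) :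
    μ {ω | t < sInf {s : ℕ | ω s = (j : ℤ)}} ≤
      ENNReal.ofReal (Real.exp (-(((β - 1) / (β + 1)) ^ 2 / 16) * t)) := by
  set m := (β - 1) / (β + 1)
  have hm0 : 0 < m := div_pos (by linarith) (by linarith)
  have hm1 : m < 1 := (div_lt_one (by linarith)).2 (by linarith)
  have hL : 0 < stepLaplace β (m / 4) := stepLaplace_pos (by linarith) _
  refine (hμ.measure_lt_hittingTime_le (by linarith) (by positivity : 0 ≤ m / 4) t).trans ?_
  rw [← ENNReal.ofReal_pow hL.le, ← ENNReal.ofReal_mul (pow_nonneg hL.le _)]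
  refine ENNReal.ofReal_le_ofReal ?_
  calc stepLaplace β (m / 4) ^ t * Real.exp (m / 4 * j)
      ≤ Real.exp ((m / 4) ^ 2 - m * (m / 4)) ^ t * Real.exp (m / 4 * (t * m / 2)) := by
        gcongr ?_ ^ _ * Real.exp ?_
        · exact stepLaplace_le_exp (by linarith) (abs_le.2 ⟨by linarith, by linarith⟩)
        · exact mul_le_mul_of_nonneg_left hj (by positivity)
    _ = Real.exp (-(m ^ 2 / 16) * t) := by rw [← Real.exp_nat_mul, ← Real.exp_add]; ring_nf

end IsTrapWalkLaw

theorem tsum_geometric_mul_le {α : ℝ} (hα0 : 0 ≤ α) (hα1 : α < 1) {a : ℕ → ℝ≥0∞} {B : ℝ≥0∞}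
    {N : ℕ} (ha : ∀ j, a j ≤ 1) (haB : ∀ j < N, a j ≤ B) :
    ∑' j, ENNReal.ofReal ((1 - α) * α ^ j) * a j ≤ B + ENNReal.ofReal (α ^ N) := by
  set w : ℕ → ℝ≥0∞ := fun j => ENNReal.ofReal ((1 - α) * α ^ j)
  have hw_shift : ∀ k, ∑' j, w (j + k) = ENNReal.ofReal (α ^ k) := fun k => by
    have hterm : ∀ j, (1 - α) * α ^ (j + k) = ((1 - α) * α ^ k) * α ^ j := fun j => by ring
    simp only [w, hterm]
    have hnonneg j : 0 ≤ (1 - α) * α ^ k * α ^ j :=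
      mul_nonneg (mul_nonneg (by linarith) (by positivity)) (by positivity)
    rw [← ENNReal.ofReal_tsum_of_nonneg hnonneg
        ((summable_geometric_of_lt_one hα0 hα1).mul_left _), tsum_mul_left,
      tsum_geometric_of_lt_one hα0 hα1, mul_assoc, mul_comm (α ^ k), ← mul_assoc,
      mul_inv_cancel₀ (by linarith), one_mul]
  have hw_tail : ∑' j, (if N ≤ j then w j else 0) = ENNReal.ofReal (α ^ N) := by
    rw [← hw_shift N, ← (add_left_injective N).tsum_eq]
    · simp
    · intro j hj
      exact ⟨j - N, Nat.sub_add_cancel (not_not.1 fun h => hj (if_neg h))⟩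
  calc ∑' j, w j * a j ≤ ∑' j, (w j * B + if N ≤ j then w j else 0) :=
        ENNReal.tsum_le_tsum fun j => by
          split_ifs with hj
          · exact (mul_le_of_le_one_right' (ha j)).trans le_add_self
          · exact (mul_le_mul_right (haB j (not_le.1 hj)) _).trans le_self_add
    _ = B + ENNReal.ofReal (α ^ N) := by
        have hw_sum : ∑' j, w j = 1 := by simpa using hw_shift 0
        rw [ENNReal.tsum_add, ENNReal.tsum_mul_right, hw_tail, hw_sum, one_mul]

theorem hitting_time_exponential_tail_general (α β : ℝ) (hα : 0 < α) (hα1 : α < 1)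
    (hβ : 1 < β)
    (μ : ℕ → Measure (ℕ → ℤ))
    (p : ℕ → ℤ → ℤ → ℝ)
    (hp : ∀ (j : ℕ) (l m : ℤ), p j l m =
      if l = 0 then (if m = 1 then 1 else 0)
      else if l = (j : ℤ) then (if m = (j : ℤ) - 1 then 1 else 0)
      else if m = l + 1 then β / (1 + β)
      else if m = l - 1 then 1 / (1 + β) else 0)
    (hcyl : ∀ (j n : ℕ) (x : ℕ → ℤ),
      μ j {ω | ∀ i ≤ n, ω i = x i} =
        (if x 0 = 0 then 1 else 0) *
          ENNReal.ofReal (∏ i ∈ Finset.range n, p j (x i) (x (i + 1)))) :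
    ∃ ε : ℝ, 0 < ε ∧ ∀ t : ℕ, 1 ≤ t →
      (∑' j : ℕ, ENNReal.ofReal ((1 - α) * α ^ j) *
          μ j {ω | t < sInf {s : ℕ | ω s = (j : ℤ)}}).toReal
        ≤ Real.exp (-ε * t) +
          Real.rpow α ((t : ℝ) * (β - 1) / (2 * (β + 1))) := by
  obtain rfl : p = trapKernel β := by ext j l m; exact hp j l m
  set m := (β - 1) / (β + 1) with hm
  have hm0 : 0 < m := div_pos (by linarith) (by linarith)
  refine ⟨m ^ 2 / 16, by positivity, fun t _ => ?_⟩
  have hexponent : (t : ℝ) * (β - 1) / (2 * (β + 1)) = t * m / 2 := by rw [hm]; field_simp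
  refine ENNReal.toReal_le_of_le_ofReal
    (add_nonneg (Real.exp_pos _).le (Real.rpow_nonneg hα.le _)) ?_
  calc _ ≤ ENNReal.ofReal (Real.exp (-(m ^ 2 / 16) * t)) + ENNReal.ofReal (α ^ ⌈t * m / 2⌉₊) :=
        tsum_geometric_mul_le hα.le hα1
          (fun j => IsTrapWalkLaw.measure_lt_hittingTime_le_one (hcyl j) (by linarith) t)
          fun j hj => IsTrapWalkLaw.measure_lt_hittingTime_le_exp (hcyl j) hβ (Nat.lt_ceil.1 hj).le
    _ ≤ _ := by
        rw [← ENNReal.ofReal_add (by positivity) (by positivity), hexponent,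
          ← Real.rpow_natCast α]
        exact ENNReal.ofReal_le_ofReal
          (add_le_add le_rfl (Real.rpow_le_rpow_of_exponent_ge hα hα1.le (Nat.le_ceil _)))

/-- Exponential tail of the time `T_in` to reach the right end of a trap of
geometric random size: with `μ j` the law of the conductance-`β^l` walk on
`{0,…,j}` started at `0`, and the trap size geometric with parameter `1-α`,
there is `ε > 0` such that
`P[T_in > t] ≤ e^{-εt} + α^{t(β-1)/(2(β+1))}` for all `t ≥ 1`. -/
theorem hitting_time_exponential_tail (α β : ℝ) (hα : 0 < α) (hα1 : α < 1)
    (hβ : 1 < β)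
    (μ : ℕ → Measure (ℕ → ℤ)) (hprob : ∀ j, IsProbabilityMeasure (μ j))
    (p : ℕ → ℤ → ℤ → ℝ)
    (hp : ∀ (j : ℕ) (l m : ℤ), p j l m =
      if l = 0 then (if m = 1 then 1 else 0)
      else if l = (j : ℤ) then (if m = (j : ℤ) - 1 then 1 else 0)
      else if m = l + 1 then β / (1 + β)
      else if m = l - 1 then 1 / (1 + β) else 0)
    (hcyl : ∀ (j n : ℕ) (x : ℕ → ℤ),
      μ j {ω | ∀ i ≤ n, ω i = x i} =
        (if x 0 = 0 then 1 else 0) *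
          ENNReal.ofReal (∏ i ∈ Finset.range n, p j (x i) (x (i + 1)))) :
    ∃ ε : ℝ, 0 < ε ∧ ∀ t : ℕ, 1 ≤ t →
      (∑' j : ℕ, ENNReal.ofReal ((1 - α) * α ^ j) *
          μ j {ω | t < sInf {s : ℕ | ω s = (j : ℤ)}}).toReal
        ≤ Real.exp (-ε * t) +
          Real.rpow α ((t : ℝ) * (β - 1) / (2 * (β + 1))) :=
  hitting_time_exponential_tail_general α β hα hα1 hβ μ p hp hcyl
end
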